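/- Let s ∈ {0,1}ⁿ be primitive with first digit 1. (a) If ι(s) is not a cyclic shift of s, then the strings s, F(s), F²(s), …, F^{n−1}(s) are pairwise distinct. (b) If ι(s) is a cyclic shift of s (so n is even), then F̃^{n/2}(s^−) = s^+, and the extended strings s^−, F̃(s^−), …, F̃^{n−1}(s^−) are pairwise distinct. -/

import Mathlib

open Finset

namespace Necklaces

variable {n : ℕ}

/-- The cyclic left shift `L` on binary strings of length `n`. -/
def shiftL (s : Fin n → Bool) : Fin n → Bool :=
  fun i => s ⟨(i.val + 1) % n, Nat.mod_lt _ (Nat.lt_of_le_of_lt (Nat.zero_le _) i.isLt)⟩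

/-- Digitwise inversion (complement) `ι`. -/
def inv (s : Fin n → Bool) : Fin n → Bool := fun i => !(s i)

/-- A string is primitive if no nontrivial cyclic shift fixes it. -/
def Primitive (s : Fin n → Bool) : Prop :=
  ∀ k : ℕ, 0 < k → k < n → shiftL^[k] s ≠ s

/-- The necklace `⟨s⟩`: the orbit of `s` under cyclic shifts. -/
def necklace (s : Fin n → Bool) : Set (Fin n → Bool) :=
  {t | ∃ k : ℕ, t = shiftL^[k] s}

/-- The necklace inversion class `[s]`: the orbit of `s` under cyclic shifts and inversion. -/
def invClass (s : Fin n → Bool) : Set (Fin n → Bool) :=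
  {t | ∃ k : ℕ, t = shiftL^[k] s ∨ t = inv (shiftL^[k] s)}

/-- The number of 1's in `s`. -/
def onesCard (s : Fin n → Bool) : ℕ := (univ.filter (fun i => s i = true)).card

/-- The mod-2 partial sum map `Ξ`: the `i`-th digit of `Ξ(s)` is `s₁+⋯+sᵢ (mod 2)`. -/
def xi (s : Fin n → Bool) : Fin n → Bool :=
  fun i => decide (Odd ((Finset.Iic i).filter (fun j => s j = true)).card)

/-- `ι(s)` is a cyclic shift of `s`. -/
def ReflexiveStr (s : Fin n → Bool) : Prop := ∃ k : ℕ, shiftL^[k] s = inv s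

/-- `s` consists of two copies of a primitive string of length `n/2`
with an odd number of 1's. -/
def TwoCopies (s : Fin n → Bool) : Prop :=
  n % 2 = 0 ∧ shiftL^[n / 2] s = s ∧ (∀ k : ℕ, 0 < k → k < n / 2 → shiftL^[k] s ≠ s) ∧
    Odd ((univ.filter (fun i : Fin n => i.val < n / 2 ∧ s i = true)).card)

/-- `s` generates a necklace belonging to `Ñ⁺(n)`. -/
def GoodPlus (s : Fin n → Bool) : Prop :=
  (Primitive s ∧ Even (onesCard s)) ∨ TwoCopies s

/-- The set `Ñ⁺(n)` of necklaces. -/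
def NtildePlus (n : ℕ) : Set (Set (Fin n → Bool)) :=
  {N | ∃ s : Fin n → Bool, GoodPlus s ∧ N = necklace s}

/-- The set `N̄(n)` of necklace inversion classes of primitive strings. -/
def Nbar (n : ℕ) : Set (Set (Fin n → Bool)) :=
  {C | ∃ s : Fin n → Bool, Primitive s ∧ C = invClass s}

/-- Lexicographic order on strings, with `0 < 1` and the leftmost digit most significant. -/
def strLt (s t : Fin n → Bool) : Prop :=
  ∃ i : Fin n, (∀ j : Fin n, j < i → s j = t j) ∧ s i < t i

/-- Extended lexicographic order on extended strings `s^b`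
(`b = false` encodes `−`, `b = true` encodes `+`). -/
def extLt (p q : (Fin n → Bool) × Bool) : Prop :=
  strLt p.1 q.1 ∨ (p.1 = q.1 ∧ p.2 < q.2)

/-- The twisted shift operator `F`. -/
def twistF (s : Fin n → Bool) : Fin n → Bool :=
  if h : 0 < n then
    (if shiftL s ⟨0, h⟩ = true then shiftL s else inv (shiftL s))
  else s

/-- The extended twisted shift operator `F̃`. -/
def extF (p : (Fin n → Bool) × Bool) : (Fin n → Bool) × Bool :=
  if h : 0 < n then
    (if twistF p.1 ⟨n - 1, Nat.sub_lt h Nat.one_pos⟩ = true then (twistF p.1, p.2)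
     else (twistF p.1, !p.2))
  else p

/-- Cyclic successor on `Fin n`. -/
def finSucc (i : Fin n) : Fin n :=
  ⟨(i.val + 1) % n, Nat.mod_lt _ (Nat.lt_of_le_of_lt (Nat.zero_le _) i.isLt)⟩

open scoped Classical in
/-- The (0-based) lexicographic rank of `μ i` among `μ₁,…,μₙ`:
the number of indices `j` with `μ j` strictly smaller than `μ i`. -/
noncomputable def rankOf {X : Type*} (lt : X → X → Prop) (μ : Fin n → X) (i : Fin n) : ℕ :=
  (univ.filter (fun j => lt (μ j) (μ i))).card

/-- `σ` is the cyclic permutation `(r₁ r₂ ⋯ rₙ)` built from the ranks `rᵢ` of `μᵢ`: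
`σ(rᵢ) = r_{i+1}` (indices mod `n`). -/
def BuiltFrom {X : Type*} (lt : X → X → Prop) (μ : Fin n → X) (σ : Equiv.Perm (Fin n)) : Prop :=
  ∀ i j : Fin n, rankOf lt μ i = j.val → (σ j).val = rankOf lt μ (finSucc i)

/-- `σ` consists of a single `n`-cycle. -/
def IsCyclicPerm (σ : Equiv.Perm (Fin n)) : Prop :=
  ∀ x y : Fin n, ∃ k : ℕ, (σ ^ k) x = y

/-- `σ` is unimodal: decreasing on an initial segment, then increasing. -/
def IsUnimodal (σ : Equiv.Perm (Fin n)) : Prop :=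
  ∃ m : Fin n, (∀ i j : Fin n, i ≤ j → j ≤ m → σ j ≤ σ i) ∧
    (∀ i j : Fin n, m ≤ i → i ≤ j → σ i ≤ σ j)

/-- Cyclic unimodal permutations. -/
def CUPperm (σ : Equiv.Perm (Fin n)) : Prop := IsCyclicPerm σ ∧ IsUnimodal σ

/-- The string `A(σ)` obtained from the itinerary of `σ` (`+ ↦ 0`, `− ↦ 1`),
with the last digit chosen so that the total number of 1's is even.
(Here `m = σ⁻¹ 0` is the unique element with `σ m` least.) -/
def Astr [NeZero n] (σ : Equiv.Perm (Fin n)) : Fin n → Bool :=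
  fun i =>
    if i.val + 1 < n then decide ((σ ^ (i.val + 1)) (σ⁻¹ 0) < σ⁻¹ 0)
    else decide (Odd ((univ.filter (fun j : Fin n =>
      j.val + 1 < n ∧ (σ ^ (j.val + 1)) (σ⁻¹ 0) < σ⁻¹ 0)).card))

/-- The string used for `Ψ(σ)`: itinerary digits with the last digit chosen
so that the total number of 1's is odd. -/
def BstrOdd [NeZero n] (σ : Equiv.Perm (Fin n)) : Fin n → Bool :=
  fun i =>
    if i.val + 1 < n then decide ((σ ^ (i.val + 1)) (σ⁻¹ 0) < σ⁻¹ 0)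
    else !(decide (Odd ((univ.filter (fun j : Fin n =>
      j.val + 1 < n ∧ (σ ^ (j.val + 1)) (σ⁻¹ 0) < σ⁻¹ 0)).card)))

/-- The itinerary of a cyclic unimodal permutation: `none` encodes `⋆` (position `n`),
`some true` encodes `−` (i.e. `σⁱ(m) < m`), `some false` encodes `+` (i.e. `σⁱ(m) > m`). -/
def itin [NeZero n] (σ : Equiv.Perm (Fin n)) : Fin n → Option Bool :=
  fun i =>
    if i.val + 1 = n then none
    else some (decide ((σ ^ (i.val + 1)) (σ⁻¹ 0) < σ⁻¹ 0))

/-- `σ` arises from the class `C` by the construction defining `λ`: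
for some representative `t` of `C` beginning with `1`, `σ` is the cyclic permutation
built from the lexicographic ranks of the iterates of `t` under `F` (non-reflexive case)
or of `t^−` under `F̃` (reflexive case). -/
def LamRel [NeZero n] (C : Set (Fin n → Bool)) (σ : Equiv.Perm (Fin n)) : Prop :=
  ∃ t : Fin n → Bool, t 0 = true ∧ C = invClass t ∧
    ((¬ ReflexiveStr t ∧ BuiltFrom strLt (fun i : Fin n => twistF^[i.val] t) σ) ∨
     (ReflexiveStr t ∧ BuiltFrom extLt (fun i : Fin n => extF^[i.val] (t, false)) σ))

/-- `σ` arises from the representative `s` by the Weiss–Rogers construction `Φ`: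
`σ` is the cyclic permutation built from the lexicographic ranks of
`νᵢ = ι(Ξ(L^{i-1}(s)))`. -/
def PhiBuilt (s : Fin n → Bool) (σ : Equiv.Perm (Fin n)) : Prop :=
  BuiltFrom strLt (fun i : Fin n => inv (xi (shiftL^[i.val] s))) σ

end Necklaces

/-!
Let `N t` be whichever of `t`, `ι t` begins with `1`. Since `L` commutes with `ι` and `N ∘ ι = N`,
the twisted shift satisfies `F ∘ N = N ∘ L`, so `F^k(s) = N(L^k s)` when `s` begins with `1`.
Two such strings agree only if the shifts `L^i s`, `L^j s` agree, which primitivity excludes for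
`i ≠ j < n`, or are complementary, which makes `s` reflexive. For the extended shift, record
along with `N t` the sign `−` or `+` according as `t` begins with `1` or `0`: this map `E` is
injective and `F̃ ∘ E = E ∘ L`, so the `F̃`-orbit of `s^−` is a copy of the `L`-orbit of `s`.
In the reflexive case `L^r s = ι s` with `0 < r < n` forces `L^{2r} s = s`, so `2r = n`, and
`F̃^{n/2}(s^−) = E(ι s) = s^+`.
-/

namespace Necklaces

variable {n : ℕ}

section Shift

lemma shiftL_iterate_apply [NeZero n] (t : Fin n → Bool) (k : ℕ) (i : Fin n) :
    shiftL^[k] t i = t ⟨(i.val + k) % n, Nat.mod_lt _ n.pos_of_neZero⟩ := by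
  induction k generalizing t with
  | zero => simp [Nat.mod_eq_of_lt i.isLt]
  | succ k ih =>
    rw [Function.iterate_succ_apply, ih]
    exact congrArg t (Fin.ext (by simp [← add_assoc]))

lemma shiftL_iterate_mod [NeZero n] (t : Fin n → Bool) (k : ℕ) :
    shiftL^[k % n] t = shiftL^[k] t := by
  funext i
  simp only [shiftL_iterate_apply, Nat.add_mod_mod]

lemma shiftL_iterate_self [NeZero n] (t : Fin n → Bool) : shiftL^[n] t = t := by
  rw [← shiftL_iterate_mod, Nat.mod_self, Function.iterate_zero, id]

lemma shiftL_injective [NeZero n] : Function.Injective (shiftL : (Fin n → Bool) → _) := by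
  intro t u h
  have hcancel : ∀ v : Fin n → Bool, shiftL^[n - 1] (shiftL v) = v := fun v => by
    rw [← Function.iterate_succ_apply, Nat.succ_eq_add_one, Nat.sub_add_cancel n.pos_of_neZero,
      shiftL_iterate_self]
  rw [← hcancel t, ← hcancel u, h]

lemma inv_involutive : Function.Involutive (inv : (Fin n → Bool) → _) := fun t => by
  funext i
  simp [inv]

lemma shiftL_iterate_inv (t : Fin n → Bool) (k : ℕ) :
    shiftL^[k] (inv t) = inv (shiftL^[k] t) :=
  (show Function.Commute shiftL (inv : (Fin n → Bool) → _) from fun _ => rfl).iterate_left k t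

end Shift

section Primitive

variable [NeZero n] {s : Fin n → Bool}

lemma Primitive.dvd_of_shiftL_iterate_eq_self (hs : Primitive s) {k : ℕ}
    (h : shiftL^[k] s = s) : n ∣ k := by
  rw [Nat.dvd_iff_mod_eq_zero]
  by_contra hk
  exact hs (k % n) (Nat.pos_of_ne_zero hk) (Nat.mod_lt _ n.pos_of_neZero)
    ((shiftL_iterate_mod s k).trans h)

lemma Primitive.injective_shiftL_iterate (hs : Primitive s) :
    Function.Injective fun i : Fin n => shiftL^[i.val] s := by
  have hne : ∀ i j : Fin n, i < j → shiftL^[i.val] s ≠ shiftL^[j.val] s := by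
    intro i j hij h
    have hperiod : shiftL^[j.val - i.val] s = s := by
      apply shiftL_injective.iterate i.val
      rw [← Function.iterate_add_apply, Nat.add_sub_cancel' hij.le, h]
    have := Nat.eq_zero_of_dvd_of_lt (hs.dvd_of_shiftL_iterate_eq_self hperiod) (by omega)
    omega
  intro i j h
  by_contra hij
  rcases lt_or_gt_of_ne hij with hlt | hlt
  exacts [hne i j hlt h, hne j i hlt h.symm]

lemma reflexiveStr_of_shiftL_iterate_eq_inv {a b : ℕ} (hb : b ≤ n)
    (h : shiftL^[a] s = inv (shiftL^[b] s)) : ReflexiveStr s := by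
  refine ⟨n - b + a, ?_⟩
  rw [Function.iterate_add_apply, h, ← shiftL_iterate_inv, ← Function.iterate_add_apply,
    Nat.sub_add_cancel hb, shiftL_iterate_self]

lemma Primitive.mod_two_eq_zero_and_shiftL_iterate_half_eq_inv (hs : Primitive s)
    (hrefl : ReflexiveStr s) : n % 2 = 0 ∧ shiftL^[n / 2] s = inv s := by
  obtain ⟨k, hk⟩ := hrefl
  set r := k % n
  have hr : shiftL^[r] s = inv s := (shiftL_iterate_mod s k).trans hk
  have hr0 : r ≠ 0 := by
    intro h0
    have := congrFun hr 0
    simp [h0, inv] at this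
  have h2r : n ∣ r + r := hs.dvd_of_shiftL_iterate_eq_self <| by
    rw [Function.iterate_add_apply, hr, shiftL_iterate_inv, hr, inv_involutive]
  have hrn : r + r = n :=
    Nat.eq_of_dvd_of_lt_two_mul (by omega) h2r (by have := Nat.mod_lt k n.pos_of_neZero; omega)
  rw [show n / 2 = r by omega]
  exact ⟨by omega, hr⟩

end Primitive

section Normalize

variable [NeZero n]

def normalize (t : Fin n → Bool) : Fin n → Bool := if t 0 = true then t else inv t

lemma normalize_eq_self {t : Fin n → Bool} (h : t 0 = true) : normalize t = t := if_pos h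

lemma normalize_inv (t : Fin n → Bool) : normalize (inv t) = normalize t := by
  cases h : t 0 <;> simp [normalize, inv, h, inv_involutive t]

lemma eq_or_eq_inv_of_normalize_eq {t u : Fin n → Bool} (h : normalize t = normalize u) :
    t = u ∨ t = inv u := by
  unfold normalize at h
  split_ifs at h
  · exact .inl h
  · exact .inr h
  · exact .inr (by rw [← h, inv_involutive])
  · exact .inl (inv_involutive.injective h)

lemma twistF_eq_normalize_shiftL (t : Fin n → Bool) : twistF t = normalize (shiftL t) :=
  dif_pos n.pos_of_neZero

lemma semiconj_normalize_shiftL_twistF :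
    Function.Semiconj (normalize (n := n)) shiftL twistF := by
  intro t
  rw [twistF_eq_normalize_shiftL]
  by_cases h : t 0 = true
  · rw [normalize_eq_self h]
  · rw [show normalize t = inv t from if_neg h]
    exact (normalize_inv (shiftL t)).symm

lemma twistF_iterate {s : Fin n → Bool} (h : s 0 = true) (k : ℕ) :
    twistF^[k] s = normalize (shiftL^[k] s) := by
  rw [(semiconj_normalize_shiftL_twistF.iterate_right k).eq, normalize_eq_self h]

def extNormalize (t : Fin n → Bool) : (Fin n → Bool) × Bool := (normalize t, !t 0)

lemma extNormalize_injective : Function.Injective (extNormalize (n := n)) := by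
  intro t u h
  simp only [extNormalize, Prod.mk.injEq, Bool.not_inj_iff] at h
  obtain ⟨hnorm, hhead⟩ := h
  refine (eq_or_eq_inv_of_normalize_eq hnorm).resolve_right fun hinv => ?_
  have := congrFun hinv 0
  simp [inv, hhead] at this

lemma shiftL_apply_last (t : Fin n → Bool) :
    shiftL t ⟨n - 1, Nat.sub_lt n.pos_of_neZero Nat.one_pos⟩ = t 0 :=
  congrArg t (Fin.ext (by simp [Nat.sub_add_cancel n.pos_of_neZero]))

lemma semiconj_extNormalize_shiftL_extF :
    Function.Semiconj extNormalize shiftL (extF (n := n)) := by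
  intro t
  -- the last digit of `F (N t)` is `1` iff the first two digits of `t` agree, iff the sign stays
  have hlast := shiftL_apply_last t
  simp only [extNormalize, extF, dif_pos n.pos_of_neZero,
    ← semiconj_normalize_shiftL_twistF t]
  unfold normalize
  cases h : shiftL t 0 <;> cases h0 : t 0 <;> simp_all [inv]

lemma extF_iterate {s : Fin n → Bool} (h : s 0 = true) (k : ℕ) :
    extF^[k] (s, false) = extNormalize (shiftL^[k] s) := by
  rw [(semiconj_extNormalize_shiftL_extF.iterate_right k).eq]
  simp [extNormalize, normalize_eq_self h, h]

end Normalize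

/-- Let `s ∈ {0,1}ⁿ` be primitive with first digit 1.
(a) If `ι(s)` is not a cyclic shift of `s`, then `s, F(s), …, F^{n−1}(s)` are pairwise
distinct. (b) If `ι(s)` is a cyclic shift of `s`, then `n` is even,
`F̃^{n/2}(s^−) = s^+`, and `s^−, F̃(s^−), …, F̃^{n−1}(s^−)` are pairwise distinct. -/
theorem twistF_orbit_distinct (n : ℕ) [NeZero n] (s : Fin n → Bool)
    (hprim : Primitive s) (h1 : s 0 = true) :
    (¬ ReflexiveStr s → Function.Injective (fun i : Fin n => twistF^[i.val] s)) ∧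
    (ReflexiveStr s →
      n % 2 = 0 ∧ extF^[n / 2] (s, false) = (s, true) ∧
      Function.Injective (fun i : Fin n => extF^[i.val] (s, false))) := by
  refine ⟨fun hrefl i j hij => ?_, fun hrefl => ?_⟩
  · simp only [twistF_iterate h1] at hij
    rcases eq_or_eq_inv_of_normalize_eq hij with heq | hinv
    · exact hprim.injective_shiftL_iterate heq
    · exact absurd (reflexiveStr_of_shiftL_iterate_eq_inv j.isLt.le hinv) hrefl
  · obtain ⟨heven, hhalf⟩ := hprim.mod_two_eq_zero_and_shiftL_iterate_half_eq_inv hrefl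
    refine ⟨heven, ?_, fun i j hij => ?_⟩
    · rw [extF_iterate h1, hhalf, extNormalize, normalize_inv, normalize_eq_self h1]
      simp [inv, h1]
    · simp only [extF_iterate h1] at hij
      exact hprim.injective_shiftL_iterate (extNormalize_injective hij)

end Necklaces
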